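/- Let Q₁, …, Q_r be pairwise non-order-isomorphic abstract polytopes, each of rank ≥ 0 and prime with respect to the join, let m₁, …, m_r ≥ 1, and let P = Q₁^{*m₁} * ⋯ * Q_r^{*m_r} (where Q^{*m} denotes the m-fold join of Q with itself). Then Aut(P) is isomorphic as a group to ∏_{i=1}^r (Aut(Q_i)^{m_i} ⋊ Sym(m_i)), where each symmetric group Sym(m_i) acts on Aut(Q_i)^{m_i} by permuting the coordinates. -/

import Mathlib

universe u v

/-- An abstract polytope of rank `n ≥ -1`: a partial order with a least element (the `⊥` of the
`OrderBot` instance) and a greatest element, in which every maximal chain has exactly `n + 2`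
elements, every interval admitting a maximal chain of at least 4 elements is connected, and the
diamond condition holds. -/
structure IsAbstractPolytope (P : Type u) [PartialOrder P] [OrderBot P] (n : ℤ) : Prop where
  neg_one_le : -1 ≤ n
  exists_top : ∃ t : P, IsTop t
  maxChain_card : ∀ s : Set P, IsMaxChain (· ≤ ·) s → s.ncard = (n + 2).toNat
  connected : ∀ x z : P, x ≤ z →
      (∃ c : Set (Set.Icc x z), IsMaxChain (· ≤ ·) c ∧ 4 ≤ c.ncard) →
      ∀ F G : Set.Icc x z, (F : P) ≠ x → (F : P) ≠ z → (G : P) ≠ x → (G : P) ≠ z →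
        Relation.ReflTransGen
          (fun a b : Set.Icc x z =>
            ((a : P) ≠ x ∧ (a : P) ≠ z ∧ (b : P) ≠ x ∧ (b : P) ≠ z) ∧
              ((a : P) ≤ (b : P) ∨ (b : P) ≤ (a : P))) F G
  diamond : ∀ x z : P, x < z →
      (∀ c : Set (Set.Icc x z), IsMaxChain (· ≤ ·) c → c.ncard = 4) →
      {y : P | x < y ∧ y < z}.ncard = 2

/-- `x` has rank `k` if every maximal chain of the interval `[⊥, x] = Set.Iic x`
has exactly `k + 2` elements. -/
def HasRank {P : Type u} [PartialOrder P] [OrderBot P] (x : P) (k : ℤ) : Prop :=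
  ∀ c : Set (Set.Iic x), IsMaxChain (· ≤ ·) c → c.ncard = (k + 2).toNat

/-- The Cartesian product `P ×c Q` of two bounded posets: the subposet of `P × Q`
consisting of `(⊥, ⊥)` together with all pairs with both entries different from `⊥`.
(The join `P * Q` is just `P × Q` with the componentwise order.) -/
abbrev CartProd (P : Type u) (Q : Type v) [PartialOrder P] [OrderBot P]
    [PartialOrder Q] [OrderBot Q] : Type (max u v) :=
  {x : P × Q // x = (⊥, ⊥) ∨ (x.1 ≠ ⊥ ∧ x.2 ≠ ⊥)}

instance CartProd.instOrderBot (P : Type u) (Q : Type v) [PartialOrder P] [OrderBot P]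
    [PartialOrder Q] [OrderBot Q] : OrderBot (CartProd P Q) where
  bot := ⟨(⊥, ⊥), Or.inl rfl⟩
  bot_le x := show ((⊥, ⊥) : P × Q) ≤ x.val from bot_le

/-- The iterated Cartesian product of a family of bounded posets: tuples which are either
everywhere `⊥` or nowhere `⊥`. -/
abbrev CartPi {ι : Type v} (Q : ι → Type u) [∀ i, PartialOrder (Q i)] [∀ i, OrderBot (Q i)] :
    Type (max u v) :=
  {f : (i : ι) → Q i // (∀ i, f i = ⊥) ∨ (∀ i, f i ≠ ⊥)}

instance CartPi.instOrderBot {ι : Type v} (Q : ι → Type u) [∀ i, PartialOrder (Q i)]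
    [∀ i, OrderBot (Q i)] : OrderBot (CartPi Q) where
  bot := ⟨fun _ => ⊥, Or.inl fun _ => rfl⟩
  bot_le f := show (fun _ => ⊥) ≤ f.val from bot_le

/-- The `k`-fold Cartesian product of a bounded poset with itself. -/
abbrev CartPow (P : Type u) [PartialOrder P] [OrderBot P] (k : ℕ) : Type u :=
  CartPi (fun _ : Fin k => P)

/-- A bundled poset with a least element. -/
structure BddPoset : Type (u + 1) where
  carrier : Type u
  [po : PartialOrder carrier]
  [ob : OrderBot carrier]

attribute [instance] BddPoset.po BddPoset.ob

instance : CoeSort BddPoset.{u} (Type u) := ⟨BddPoset.carrier⟩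

/-- Prime with respect to the join: not order-isomorphic to a join `A * B = A × B` of two
abstract polytopes of rank at least `0`. -/
def JoinPrime (X : Type u) [PartialOrder X] [OrderBot X] : Prop :=
  ¬ ∃ (A B : BddPoset.{u}) (a b : ℤ), 0 ≤ a ∧ 0 ≤ b ∧
      IsAbstractPolytope A.carrier a ∧ IsAbstractPolytope B.carrier b ∧
      Nonempty (X ≃o (A.carrier × B.carrier))

/-- Prime with respect to the Cartesian product: not order-isomorphic to a Cartesian product
of two abstract polytopes of rank at least `1`. -/
def CartPrime (X : Type u) [PartialOrder X] [OrderBot X] : Prop :=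
  ¬ ∃ (A B : BddPoset.{u}) (a b : ℤ), 1 ≤ a ∧ 1 ≤ b ∧
      IsAbstractPolytope A.carrier a ∧ IsAbstractPolytope B.carrier b ∧
      Nonempty (X ≃o CartProd A.carrier B.carrier)

/-- `R` is a factor of `X` with respect to the join. -/
def JoinFactor (R : BddPoset.{u}) (X : Type u) [PartialOrder X] [OrderBot X] : Prop :=
  ∃ S : BddPoset.{u}, (∃ s : ℤ, IsAbstractPolytope S.carrier s) ∧
    Nonempty (X ≃o (R.carrier × S.carrier))

/-- `R` is a factor of `X` with respect to the Cartesian product. -/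
def CartFactor (R : BddPoset.{u}) (X : Type u) [PartialOrder X] [OrderBot X] : Prop :=
  ∃ S : BddPoset.{u}, (∃ s : ℤ, IsAbstractPolytope S.carrier s) ∧
    Nonempty (X ≃o CartProd R.carrier S.carrier)

/-- Relatively prime with respect to the join: no join-prime abstract polytope of rank `≥ 0` is a
join-factor of both. -/
def JoinRelPrime (X : Type u) [PartialOrder X] [OrderBot X]
    (Y : Type u) [PartialOrder Y] [OrderBot Y] : Prop :=
  ¬ ∃ R : BddPoset.{u}, (∃ r : ℤ, 0 ≤ r ∧ IsAbstractPolytope R.carrier r) ∧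
      JoinPrime R.carrier ∧ JoinFactor R X ∧ JoinFactor R Y

/-- Relatively prime with respect to the Cartesian product. -/
def CartRelPrime (X : Type u) [PartialOrder X] [OrderBot X]
    (Y : Type u) [PartialOrder Y] [OrderBot Y] : Prop :=
  ¬ ∃ R : BddPoset.{u}, (∃ r : ℤ, 1 ≤ r ∧ IsAbstractPolytope R.carrier r) ∧
      CartPrime R.carrier ∧ CartFactor R X ∧ CartFactor R Y

/-- A pyramid: order-isomorphic to `Q * pt` for some abstract polytope `Q`, where
`pt = Bool` is the two-element chain. -/
def IsPyramid (X : Type u) [PartialOrder X] [OrderBot X] : Prop :=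
  ∃ Q : BddPoset.{u}, (∃ q : ℤ, IsAbstractPolytope Q.carrier q) ∧
    Nonempty (X ≃o (Q.carrier × Bool))

/-- A prism: order-isomorphic to `Q ×c I` for some abstract polytope `Q`, where
`I = Bool × Bool` is the four-element rank-one polytope. -/
def IsPrism (X : Type u) [PartialOrder X] [OrderBot X] : Prop :=
  ∃ Q : BddPoset.{u}, (∃ q : ℤ, IsAbstractPolytope Q.carrier q) ∧
    Nonempty (X ≃o CartProd Q.carrier (Bool × Bool))

/-- The homomorphism from `Equiv.Perm ι` to automorphisms of `ι → G` permuting the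
coordinates: `σ` sends `v` to `v ∘ σ⁻¹`. -/
def permHom (ι : Type v) (G : Type u) [Group G] : Equiv.Perm ι →* MulAut (ι → G) where
  toFun σ :=
    { toFun := fun v => v ∘ σ.symm
      invFun := fun v => v ∘ σ
      left_inv := fun v => by funext i; simp
      right_inv := fun v => by funext i; simp
      map_mul' := fun v w => rfl }
  map_one' := by apply MulEquiv.ext; intro v; funext i; rfl
  map_mul' σ τ := by apply MulEquiv.ext; intro v; funext i; rfl

/-!
Call `u` a direct factor of a poset if `x ↦ (x ⊓ u, x ⊓ v)` is an isomorphism onto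
`[⊥, u] × [⊥, v]` for some `v`; automorphisms map direct factors to direct factors. Lower
sections of a polytope are polytopes, so a join-prime polytope is directly indecomposable. In a
product `∏ₖ Pₖ` of directly indecomposable bounded posets the direct factors are therefore the
elements all of whose coordinates are `⊥` or `⊤`, and the minimal nonzero ones are the axes
`botSingle k ⊤`. An automorphism `g` thus permutes the axes by some `σ`, and being determined by
the meets `g x ⊓ botSingle (σ k) ⊤`, it is given by isomorphisms `Pₖ ≃o P_{σ k}`. For
`P = ∏ᵢ Qᵢ^{mᵢ}` with pairwise non-isomorphic `Qᵢ`, `σ` preserves each block `i`, which is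
exactly the surjectivity of the natural map `∏ᵢ (Aut Qᵢ^{mᵢ} ⋊ Sym mᵢ) → Aut P`.
-/

open Set Function

section Order

variable {α β γ δ : Type*}

theorem isGLB_pair_of_le [PartialOrder α] {a b : α} (h : a ≤ b) : IsGLB {a, b} a :=
  IsLeast.isGLB ⟨mem_insert a {b}, by rintro c (rfl | rfl); exacts [le_rfl, h]⟩

theorem top_ne_bot_of_nontrivial [PartialOrder α] [OrderBot α] [OrderTop α] [Nontrivial α] :
    (⊤ : α) ≠ ⊥ := fun h =>
  let ⟨_, ha⟩ := exists_ne (⊥ : α)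
  ha (le_bot_iff.1 (h ▸ le_top))

theorem IsMaxChain.mem_of_forall_le_or_le [PartialOrder α] {s : Set α}
    (hs : IsMaxChain (· ≤ ·) s) {x : α} (hx : ∀ c ∈ s, c ≤ x ∨ x ≤ c) : x ∈ s :=
  (hs.2 (hs.1.insert fun c hc _ => (hx c hc).symm) (subset_insert x s)).symm ▸ mem_insert x s

theorem IsChain.isMaxChain_of_forall [PartialOrder α] {s : Set α} (hs : IsChain (· ≤ ·) s)
    (h : ∀ x, (∀ c ∈ s, c ≤ x ∨ x ≤ c) → x ∈ s) : IsMaxChain (· ≤ ·) s := by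
  refine ⟨hs, fun t ht hst => hst.antisymm fun x hx => h x fun c hc => ?_⟩
  rcases eq_or_ne c x with rfl | hcx
  · exact Or.inl le_rfl
  · exact ht (hst hc) hx hcx

theorem IsMaxChain.image_union_image [PartialOrder α] {y : α} {C : Set (Iic y)}
    {D : Set (Ici y)} (hC : IsMaxChain (· ≤ ·) C) (hD : IsMaxChain (· ≤ ·) D) :
    IsMaxChain (· ≤ ·) ((↑) '' C ∪ (↑) '' D : Set α) := by
  refine IsChain.isMaxChain_of_forall ?_ fun x hx => ?_
  · rintro _ (⟨a, ha, rfl⟩ | ⟨a, ha, rfl⟩) _ (⟨b, hb, rfl⟩ | ⟨b, hb, rfl⟩) hab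
    · exact hC.1 ha hb (ne_of_apply_ne _ hab)
    · exact Or.inl (a.2.trans b.2)
    · exact Or.inr (b.2.trans a.2)
    · exact hD.1 ha hb (ne_of_apply_ne _ hab)
  · rcases hx y (Or.inl ⟨⊤, hC.top_mem, rfl⟩) with hyx | hxy
    · exact Or.inr ⟨⟨x, hyx⟩, hD.mem_of_forall_le_or_le fun c hc => hx c (Or.inr ⟨c, hc, rfl⟩), rfl⟩
    · exact Or.inl ⟨⟨x, hxy⟩, hC.mem_of_forall_le_or_le fun c hc => hx c (Or.inl ⟨c, hc, rfl⟩), rfl⟩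

def Set.Iic.IccOrderIso [Preorder α] {y : α} (x z : Iic y) : Icc x z ≃o Icc (x : α) z where
  toFun w := ⟨w.1, w.2⟩
  invFun w := ⟨⟨w, w.2.2.trans z.2⟩, w.2⟩
  left_inv _ := rfl
  right_inv _ := rfl
  map_rel_iff' := Iff.rfl

def Set.Iic.IicOrderIso [Preorder α] {u y : α} {a : Iic u} {b : Iic y} (h : (a : α) = b) :
    Iic a ≃o Iic b where
  toFun w := ⟨⟨w.1.1, (h ▸ w.2 : w.1.1 ≤ b).trans b.2⟩, (h ▸ w.2 : w.1.1 ≤ b)⟩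
  invFun w := ⟨⟨w.1.1, (h ▸ w.2 : w.1.1 ≤ a).trans a.2⟩, (h ▸ w.2 : w.1.1 ≤ a)⟩
  left_inv _ := rfl
  right_inv _ := rfl
  map_rel_iff' := Iff.rfl

def Prod.IicOrderIso [Preorder α] [Preorder β] (a : α) (b : β) :
    Iic (a, b) ≃o Iic a × Iic b where
  toFun w := (⟨w.1.1, w.2.1⟩, ⟨w.1.2, w.2.2⟩)
  invFun w := ⟨(w.1, w.2), w.1.2, w.2.2⟩
  left_inv _ := rfl
  right_inv _ := rfl
  map_rel_iff' := Iff.rfl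

def OrderIso.restrictIic [Preorder α] [Preorder β] (g : α ≃o β) (a : α) :
    Iic a ≃o Iic (g a) where
  toFun x := ⟨g x, g.monotone x.2⟩
  invFun y := ⟨g.symm y, g.symm_apply_le.2 y.2⟩
  left_inv x := Subtype.ext (g.symm_apply_apply x)
  right_inv y := Subtype.ext (g.apply_symm_apply y)
  map_rel_iff' := g.le_iff_le

def OrderIso.prodCongr [Preorder α] [Preorder β] [Preorder γ] [Preorder δ]
    (f : α ≃o β) (g : γ ≃o δ) : α × γ ≃o β × δ where
  toEquiv := f.toEquiv.prodCongr g.toEquiv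
  map_rel_iff' := by simp [Prod.le_def]

end Order

namespace IsAbstractPolytope

variable {Q : Type u} [PartialOrder Q] [OrderBot Q] {n : ℤ}

theorem finite_of_isMaxChain (hP : IsAbstractPolytope Q n) {s : Set Q}
    (hs : IsMaxChain (· ≤ ·) s) : s.Finite :=
  finite_of_ncard_pos (by rw [hP.maxChain_card s hs]; have := hP.neg_one_le; omega)

theorem nontrivial (hP : IsAbstractPolytope Q n) (hn : 0 ≤ n) : Nontrivial Q := by
  have hs : IsMaxChain (· ≤ ·) (maxChain (· ≤ ·) : Set Q) := maxChain_spec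
  obtain ⟨a, b, -, -, hab⟩ :=
    (one_lt_ncard_iff (hP.finite_of_isMaxChain hs)).1 (by rw [hP.maxChain_card _ hs]; omega)
  exact ⟨a, b, hab⟩

noncomputable abbrev orderTop (hP : IsAbstractPolytope Q n) : OrderTop Q where
  top := hP.exists_top.choose
  le_top := hP.exists_top.choose_spec

/-- Together with a fixed maximal chain `D` of `[y, ⊤]`, every maximal chain of `[⊥, y]`
forms a maximal chain of `Q`, meeting `D` only in `y`. -/
theorem finite_and_ncard_add_ncard (hP : IsAbstractPolytope Q n) {y : Q} {C : Set (Iic y)}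
    {D : Set (Ici y)} (hC : IsMaxChain (· ≤ ·) C) (hD : IsMaxChain (· ≤ ·) D) :
    C.Finite ∧ C.ncard + D.ncard = (n + 2).toNat + 1 := by
  have hU := hC.image_union_image hD
  have hfin := hP.finite_of_isMaxChain hU
  have hinter : ((↑) '' C ∩ (↑) '' D : Set Q) = {y} := by
    refine Subset.antisymm ?_ (singleton_subset_iff.2 ⟨⟨⊤, hC.top_mem, rfl⟩, ⊥, hD.bot_mem, rfl⟩)
    rintro _ ⟨⟨a, -, rfl⟩, b, -, hb⟩
    exact le_antisymm a.2 (hb ▸ b.2)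
  have := ncard_union_add_ncard_inter _ _ (hfin.subset subset_union_left)
    (hfin.subset subset_union_right)
  rw [hinter, hP.maxChain_card _ hU, ncard_singleton,
    ncard_image_of_injective _ Subtype.val_injective,
    ncard_image_of_injective _ Subtype.val_injective] at this
  exact ⟨(hfin.subset subset_union_left).of_finite_image Subtype.val_injective.injOn, this.symm⟩

theorem exists_ncard_isMaxChain_Iic (hP : IsAbstractPolytope Q n) {y : Q} (hy : y ≠ ⊥) :
    ∃ h : ℕ, 2 ≤ h ∧ ∀ C : Set (Iic y), IsMaxChain (· ≤ ·) C → C.ncard = h := by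
  have hD : IsMaxChain (· ≤ ·) (maxChain (· ≤ ·) : Set (Ici y)) := maxChain_spec
  have hC₀ : IsMaxChain (· ≤ ·) (maxChain (· ≤ ·) : Set (Iic y)) := maxChain_spec
  obtain ⟨hfin, hcard₀⟩ := hP.finite_and_ncard_add_ncard hC₀ hD
  refine ⟨(maxChain (· ≤ ·) : Set (Iic y)).ncard, ?_, fun C hC => ?_⟩
  · refine (one_lt_ncard_iff hfin).2 ⟨⊥, ⊤, hC₀.bot_mem, hC₀.top_mem, fun h => hy ?_⟩
    exact (congrArg Subtype.val h).symm
  · have := (hP.finite_and_ncard_add_ncard hC hD).2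
    omega

theorem exists_isAbstractPolytope_Iic (hP : IsAbstractPolytope Q n) {y : Q} (hy : y ≠ ⊥) :
    ∃ k : ℤ, 0 ≤ k ∧ IsAbstractPolytope (Iic y) k := by
  obtain ⟨h, h2, hcard⟩ := hP.exists_ncard_isMaxChain_Iic hy
  refine ⟨h - 2, by omega, by omega, ⟨⊤, isTop_top⟩, fun s hs => by rw [hcard s hs]; omega,
    fun x z hxz ⟨c, hc, hc4⟩ F G hFx hFz hGx hGz => ?_, fun x z hxz hchains => ?_⟩
  · let φ := Set.Iic.IccOrderIso x z
    have hconn := hP.connected x z hxz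
      ⟨φ '' c, hc.image φ, by rwa [ncard_image_of_injective _ φ.injective]⟩ (φ F) (φ G)
      (fun h => hFx (Subtype.ext h)) (fun h => hFz (Subtype.ext h))
      (fun h => hGx (Subtype.ext h)) (fun h => hGz (Subtype.ext h))
    simpa only [onFun, OrderIso.symm_apply_apply] using hconn.lift φ.symm fun a b hab =>
      ⟨⟨mt (congrArg Subtype.val) hab.1.1, mt (congrArg Subtype.val) hab.1.2.1,
        mt (congrArg Subtype.val) hab.1.2.2.1, mt (congrArg Subtype.val) hab.1.2.2.2⟩, hab.2⟩
  · let φ := Set.Iic.IccOrderIso x z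
    have himage : (↑) '' {w : Iic y | x < w ∧ w < z} = {w : Q | (x : Q) < w ∧ w < z} := by
      ext w
      refine ⟨?_, fun hw => ⟨⟨w, hw.2.le.trans z.2⟩, hw, rfl⟩⟩
      rintro ⟨w, hw, rfl⟩
      exact hw
    rw [← ncard_image_of_injective _ Subtype.val_injective, himage]
    refine hP.diamond x z hxz fun c hc => ?_
    rw [← hchains _ (hc.image φ.symm), ncard_image_of_injective _ φ.symm.injective]

end IsAbstractPolytope

section DirectDecomposition

variable {X Y : Type*} [PartialOrder X] [PartialOrder Y]

/-- `e` splits `X` as `[⊥, u] × [⊥, v]` via `x ↦ (x ⊓ u, x ⊓ v)`; the meets are only required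
to exist for the elements involved, as `X` need not be a lattice. -/
structure IsDirectDecomposition {u v : X} (e : X ≃o Iic u × Iic v) : Prop where
  isGLB_fst : ∀ x, IsGLB {x, u} ((e x).1 : X)
  isGLB_snd : ∀ x, IsGLB {x, v} ((e x).2 : X)

def IsDirectFactor (u : X) : Prop :=
  ∃ (v : X) (e : X ≃o Iic u × Iic v), IsDirectDecomposition e

namespace IsDirectDecomposition

variable {u v : X} {e : X ≃o Iic u × Iic v}

theorem symm (he : IsDirectDecomposition e) :
    IsDirectDecomposition (e.trans OrderIso.prodComm) :=
  ⟨he.isGLB_snd, he.isGLB_fst⟩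

theorem map (he : IsDirectDecomposition e) (g : X ≃o Y) :
    IsDirectDecomposition
      (g.symm.trans (e.trans ((g.restrictIic u).prodCongr (g.restrictIic v)))) := by
  constructor <;> intro x
  · have := g.isGLB_image'.2 (he.isGLB_fst (g.symm x))
    rwa [image_pair, g.apply_symm_apply] at this
  · have := g.isGLB_image'.2 (he.isGLB_snd (g.symm x))
    rwa [image_pair, g.apply_symm_apply] at this

theorem snd_eq_of_le (he : IsDirectDecomposition e) {x : X} (hx : x ≤ v) :
    ((e x).2 : X) = x :=
  (he.isGLB_snd x).unique (isGLB_pair_of_le hx)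

end IsDirectDecomposition

theorem IsDirectFactor.map {u : X} (hu : IsDirectFactor u) (g : X ≃o Y) :
    IsDirectFactor (g u) :=
  let ⟨_, _, he⟩ := hu
  ⟨_, _, he.map g⟩

variable [OrderBot X] [OrderBot Y]

variable (X) in
def IsDirectlyIndecomposable : Prop :=
  ∀ a b : X, Nonempty (X ≃o Iic a × Iic b) → a = ⊥ ∨ b = ⊥

theorem IsDirectlyIndecomposable.of_orderIso (h : IsDirectlyIndecomposable Y) (φ : X ≃o Y) :
    IsDirectlyIndecomposable X := by
  rintro a b ⟨e⟩
  simpa only [map_eq_bot_iff] using h (φ a) (φ b)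
    ⟨φ.symm.trans (e.trans ((φ.restrictIic a).prodCongr (φ.restrictIic b)))⟩

theorem JoinPrime.isDirectlyIndecomposable {Q : Type u} [PartialOrder Q] [OrderBot Q] {n : ℤ}
    (hQ : JoinPrime Q) (hP : IsAbstractPolytope Q n) : IsDirectlyIndecomposable Q := by
  rintro a b ⟨e⟩
  by_contra! h
  obtain ⟨ka, hka, hPa⟩ := hP.exists_isAbstractPolytope_Iic h.1
  obtain ⟨kb, hkb, hPb⟩ := hP.exists_isAbstractPolytope_Iic h.2
  exact hQ ⟨⟨Iic a⟩, ⟨Iic b⟩, ka, kb, hka, hkb, hPa, hPb, ⟨e⟩⟩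

namespace IsDirectDecomposition

variable {u v : X} {e : X ≃o Iic u × Iic v}

theorem eq_bot_of_le_of_le (he : IsDirectDecomposition e) {z : X} (hu : z ≤ u) (hv : z ≤ v) :
    z = ⊥ := by
  -- `x` lies above `u` and meets `v` in `⊥`, hence so does `u`.
  set x := e.symm (⊤, ⊥)
  have hux : u ≤ x := by
    simpa [x] using (he.isGLB_fst x).1 (mem_insert x {u})
  have hu_bot : ((e u).2 : X) = ⊥ := by
    have : (e u).2 ≤ (e x).2 := (e.le_iff_le.2 hux).2
    simpa [x] using this
  exact le_bot_iff.1 (hu_bot ▸ (he.isGLB_snd u).2 (by rintro c (rfl | rfl) <;> assumption))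

theorem fst_eq_bot_of_le (he : IsDirectDecomposition e) {x : X} (hx : x ≤ v) :
    ((e x).1 : X) = ⊥ :=
  he.eq_bot_of_le_of_le (e x).1.2 (((he.isGLB_fst x).1 (mem_insert x {u})).trans hx)

theorem le_of_fst_eq_bot (he : IsDirectDecomposition e) {x : X} (hx : ((e x).1 : X) = ⊥) :
    x ≤ v := by
  have hq : e (e x).2 = e x :=
    Prod.ext (Subtype.ext ((he.fst_eq_bot_of_le (e x).2.2).trans hx.symm))
      (Subtype.ext (he.snd_eq_of_le (e x).2.2))
  exact e.injective hq ▸ (e x).2.2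

theorem le_or_le (he : IsDirectDecomposition e) {y : X}
    (hy : IsDirectlyIndecomposable (Iic y)) : y ≤ u ∨ y ≤ v := by
  have h₁ : ((e y).1 : X) ≤ y := (he.isGLB_fst y).1 (mem_insert y {u})
  have h₂ : ((e y).2 : X) ≤ y := (he.isGLB_snd y).1 (mem_insert y {v})
  rcases hy ⟨_, h₁⟩ ⟨_, h₂⟩ ⟨(e.restrictIic y).trans ((Prod.IicOrderIso _ _).trans
      ((Set.Iic.IicOrderIso (a := (e y).1) (b := ⟨_, h₁⟩) rfl).prodCongr
        (Set.Iic.IicOrderIso (a := (e y).2) (b := ⟨_, h₂⟩) rfl)))⟩ with h | h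
  · exact Or.inr (he.le_of_fst_eq_bot (congrArg Subtype.val h))
  · exact Or.inl (he.symm.le_of_fst_eq_bot (congrArg Subtype.val h))

end IsDirectDecomposition

end DirectDecomposition

namespace Pi

variable {ι : Type*} {P : ι → Type*} [∀ k, PartialOrder (P k)] [∀ k, OrderBot (P k)]
  [DecidableEq ι]

def botSingle (k : ι) (a : P k) : ∀ l, P l :=
  update ⊥ k a

variable {k l : ι} {a b : P k} {x : ∀ l, P l}

@[simp]
theorem botSingle_apply_self : botSingle k a k = a :=
  update_self k a ⊥

@[simp]
theorem botSingle_apply_of_ne (h : l ≠ k) : botSingle k a l = ⊥ :=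
  update_of_ne h a ⊥

theorem botSingle_le_iff : botSingle k a ≤ x ↔ a ≤ x k := by
  refine ⟨fun h => by simpa using h k, fun h l => ?_⟩
  rcases eq_or_ne l k with rfl | hl
  · simpa using h
  · simp [hl]

theorem eq_botSingle_of_le (h : x ≤ botSingle k a) : x = botSingle k (x k) := by
  funext l
  rcases eq_or_ne l k with rfl | hl
  · simp
  · simpa [hl] using h l

@[simp]
theorem botSingle_le_botSingle_iff : botSingle k a ≤ botSingle k b ↔ a ≤ b := by
  simp [botSingle_le_iff]

@[simp]
theorem botSingle_eq_bot_iff : botSingle k a = ⊥ ↔ a = ⊥ := by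
  simp [← le_bot_iff, botSingle_le_iff]

variable [∀ k, OrderTop (P k)]

theorem botSingle_top_injective [∀ k, Nontrivial (P k)] :
    Injective fun k => botSingle k (⊤ : P k) := by
  intro k l h
  by_contra hkl
  have := congrFun h k
  simp only [botSingle_apply_self, botSingle_apply_of_ne hkl] at this
  exact top_ne_bot_of_nontrivial this

theorem isGLB_botSingle_top (x : ∀ l, P l) (k : ι) :
    IsGLB {x, botSingle k ⊤} (botSingle k (x k)) := by
  refine isGLB_pi.2 fun l => ?_
  rw [image_pair]
  rcases eq_or_ne l k with rfl | hl
  · simpa using isGLB_pair_of_le le_top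
  · simpa [hl, pair_comm] using isGLB_pair_of_le (bot_le : ⊥ ≤ x l)

theorem isGLB_update_bot (x : ∀ l, P l) (k : ι) :
    IsGLB {x, update ⊤ k ⊥} (update x k ⊥) := by
  refine isGLB_pi.2 fun l => ?_
  rw [image_pair]
  rcases eq_or_ne l k with rfl | hl
  · simpa [pair_comm] using isGLB_pair_of_le (bot_le : ⊥ ≤ x l)
  · simpa [hl] using isGLB_pair_of_le le_top

def IicBotSingleTopOrderIso (k : ι) : Iic (botSingle k (⊤ : P k)) ≃o P k where
  toFun y := (y : ∀ l, P l) k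
  invFun a := ⟨botSingle k a, botSingle_le_botSingle_iff.2 le_top⟩
  left_inv y := Subtype.ext (eq_botSingle_of_le y.2).symm
  right_inv a := botSingle_apply_self
  map_rel_iff' {y z} := by
    rw [Subtype.mk_le_mk, eq_botSingle_of_le y.2, eq_botSingle_of_le z.2]
    simp

def orderIsoSplitAt (k : ι) :
    (∀ l, P l) ≃o Iic (botSingle k (⊤ : P k)) × Iic (update (⊤ : ∀ l, P l) k ⊥) where
  toFun x := (⟨botSingle k (x k), botSingle_le_botSingle_iff.2 le_top⟩,
    ⟨update x k ⊥, update_le_update_iff.2 ⟨le_rfl, fun l _ => le_top⟩⟩)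
  invFun y := update (y.2 : ∀ l, P l) k ((y.1 : ∀ l, P l) k)
  left_inv x := by simp
  right_inv := by
    rintro ⟨⟨a, ha⟩, ⟨b, hb⟩⟩
    have ha' := eq_botSingle_of_le ha
    have hb' : b k = ⊥ := by simpa using hb k
    ext l <;> rcases eq_or_ne l k with rfl | hl
    · simp
    · have := congrFun ha' l
      simp [hl] at this ⊢
      exact this.symm
    · simp [hb']
    · simp [hl]
  map_rel_iff' {x y} := by
    change botSingle k (x k) ≤ botSingle k (y k) ∧ update x k ⊥ ≤ update y k ⊥ ↔ x ≤ y
    simp only [botSingle_le_botSingle_iff, update_le_update_iff, le_refl, true_and]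
    exact ⟨fun h l => (eq_or_ne l k).elim (· ▸ h.1) (h.2 l), fun h => ⟨h k, fun l _ => h l⟩⟩

theorem isDirectDecomposition_orderIsoSplitAt (k : ι) :
    IsDirectDecomposition (orderIsoSplitAt (P := P) k) :=
  ⟨fun x => isGLB_botSingle_top x k, fun x => isGLB_update_bot x k⟩

end Pi

section ProductAutomorphism

open Pi

variable {ι : Type*} {P : ι → Type*} [∀ k, PartialOrder (P k)] [∀ k, OrderBot (P k)]
  [∀ k, OrderTop (P k)] [DecidableEq ι]

theorem isDirectFactor_botSingle_top (k : ι) : IsDirectFactor (botSingle k (⊤ : P k)) :=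
  ⟨_, _, isDirectDecomposition_orderIsoSplitAt k⟩

theorem IsDirectFactor.apply_eq_top_or_eq_bot (hP : ∀ k, IsDirectlyIndecomposable (P k))
    {u : ∀ k, P k} (hu : IsDirectFactor u) (k : ι) : u k = ⊤ ∨ u k = ⊥ := by
  obtain ⟨v, e, he⟩ := hu
  rcases he.le_or_le ((hP k).of_orderIso (IicBotSingleTopOrderIso k)) with h | h
  · exact Or.inl (top_le_iff.1 (botSingle_le_iff.1 h))
  · refine Or.inr (botSingle_eq_bot_iff.1 (he.eq_bot_of_le_of_le (botSingle_le_iff.2 le_rfl) ?_))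
    exact (botSingle_le_botSingle_iff.2 le_top).trans h

theorem IsDirectFactor.eq_botSingle_top (hP : ∀ k, IsDirectlyIndecomposable (P k))
    {u : ∀ k, P k} (hu : IsDirectFactor u) (hne : u ≠ ⊥) {k : ι} (hle : u ≤ botSingle k ⊤) :
    u = botSingle k ⊤ := by
  rw [eq_botSingle_of_le hle] at hne ⊢
  rcases hu.apply_eq_top_or_eq_bot hP k with h | h
  · rw [h]
  · simp [h] at hne

variable [∀ k, Nontrivial (P k)]

/-- The direct factors `botSingle k ⊤` are the minimal nonzero direct factors, so an
automorphism permutes them. -/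
theorem OrderIso.exists_apply_botSingle_top (hP : ∀ k, IsDirectlyIndecomposable (P k))
    (g : (∀ k, P k) ≃o ∀ k, P k) (k : ι) :
    ∃ l, g (botSingle k ⊤) = botSingle l ⊤ := by
  have hbot : ∀ l, botSingle l (⊤ : P l) ≠ ⊥ := fun l =>
    botSingle_eq_bot_iff.not.2 top_ne_bot_of_nontrivial
  have hu := (isDirectFactor_botSingle_top k).map g
  obtain ⟨l, hl⟩ : ∃ l, g (botSingle k ⊤) l ≠ ⊥ := by
    by_contra! h
    exact hbot k ((map_eq_bot_iff g).1 (funext h))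
  have hle : botSingle l ⊤ ≤ g (botSingle k ⊤) :=
    botSingle_le_iff.2 ((hu.apply_eq_top_or_eq_bot hP l).resolve_right hl).ge
  refine ⟨l, ?_⟩
  rw [← ((isDirectFactor_botSingle_top l).map g.symm).eq_botSingle_top hP
    ((map_eq_bot_iff g.symm).not.2 (hbot l)) (g.symm_apply_le.2 hle), g.apply_symm_apply]

theorem OrderIso.exists_perm_pi (hP : ∀ k, IsDirectlyIndecomposable (P k))
    (g : (∀ k, P k) ≃o ∀ k, P k) :
    ∃ σ : Equiv.Perm ι, ∀ k, ∃ ψ : P k ≃o P (σ k), ∀ x, g x (σ k) = ψ (x k) := by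
  choose f hf using g.exists_apply_botSingle_top hP
  choose f' hf' using g.symm.exists_apply_botSingle_top hP
  have hinj : Injective fun k => botSingle k (⊤ : P k) := botSingle_top_injective
  let σ : Equiv.Perm ι :=
    { toFun := f
      invFun := f'
      left_inv k := hinj (by simp only [← hf', ← hf, g.symm_apply_apply])
      right_inv k := hinj (by simp only [← hf, ← hf', g.apply_symm_apply]) }
  refine ⟨σ, fun k => ⟨(IicBotSingleTopOrderIso k).symm.trans ((g.restrictIic _).trans
    ((OrderIso.setCongr _ _ (congrArg Iic (hf k))).trans (IicBotSingleTopOrderIso (f k)))),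
    fun x => ?_⟩⟩
  have hglb := g.isGLB_image'.2 (isGLB_botSingle_top x k)
  rw [image_pair, hf k] at hglb
  have := congrFun (hglb.unique (isGLB_botSingle_top (g x) (f k))) (f k)
  rw [botSingle_apply_self] at this
  exact this.symm

end ProductAutomorphism

theorem Equiv.Perm.exists_sigma_eq_of_fst {α : Type*} {β : α → Type*}
    (σ : Equiv.Perm (Σ a, β a)) (hσ : ∀ k, (σ k).1 = k.1) :
    ∃ τ : ∀ a, Equiv.Perm (β a), ∀ a b, σ ⟨a, b⟩ = ⟨a, τ a b⟩ := by
  refine ⟨fun a => (Equiv.sigmaSubtype a).permCongr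
    (σ.subtypePerm (p := fun k => k.1 = a) fun k => by rw [hσ]), fun a b => ?_⟩
  exact congrArg Subtype.val ((Equiv.sigmaSubtype a).symm_apply_apply ⟨σ ⟨a, b⟩, hσ _⟩).symm

section Wreath

variable {ι : Type*} (X : ι → Type*) [∀ i, PartialOrder (X i)] (n : ι → Type*)

abbrev WreathProduct : Type _ :=
  (i : ι) → (n i → (X i ≃o X i)) ⋊[permHom (n i) (X i ≃o X i)] Equiv.Perm (n i)

def wreathHom : WreathProduct X n →* ((∀ i, n i → X i) ≃o ∀ i, n i → X i) :=
  MonoidHom.mk'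
    (fun h => Equiv.toOrderIso
      { toFun := fun x i j => (h i).left j (x i ((h i).right⁻¹ j))
        invFun := fun x i j => ((h i).left ((h i).right j)).symm (x i ((h i).right j))
        left_inv := fun x => by ext; simp
        right_inv := fun x => by ext; simp }
      (fun x y hxy i j => ((h i).left j).monotone (hxy i _))
      (fun x y hxy i j => ((h i).left _).symm.monotone (hxy i _)))
    fun _ _ => by ext; rfl

variable {X n}

@[simp]
theorem wreathHom_apply (h : WreathProduct X n) (x : ∀ i, n i → X i) (i : ι) (j : n i) :
    wreathHom X n h x i j = (h i).left j (x i ((h i).right⁻¹ j)) :=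
  rfl

variable [∀ i, OrderBot (X i)]

open Pi in
theorem wreathHom_injective [∀ i, Nontrivial (X i)] : Injective (wreathHom X n) := by
  classical
  refine (injective_iff_map_eq_one _).2 fun h hh => ?_
  have key (i : ι) (j : n i) (a : X i) :
      (h i).left ((h i).right j) a = botSingle (P := fun _ => X i) j a ((h i).right j) := by
    simpa using congrFun (congrFun (DFunLike.congr_fun hh
      (botSingle (P := fun i => n i → X i) i (botSingle j a))) i) ((h i).right j)
  have hright (i : ι) (j : n i) : (h i).right j = j := by
    by_contra hj
    obtain ⟨a, ha⟩ := exists_ne (⊥ : X i)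
    have := key i j a
    rw [botSingle_apply_of_ne hj] at this
    exact ha ((map_eq_bot_iff _).1 this)
  have hleft (i : ι) (j : n i) (a : X i) : (h i).left j a = a := by
    have := key i j a
    rw [hright] at this
    simpa using this
  funext i
  exact SemidirectProduct.ext (funext fun j => OrderIso.ext (funext (hleft i j)))
    (Equiv.ext (hright i))

theorem wreathHom_surjective [∀ i, OrderTop (X i)] [∀ i, Nontrivial (X i)]
    (hdist : ∀ i j, i ≠ j → IsEmpty (X i ≃o X j)) (hX : ∀ i, IsDirectlyIndecomposable (X i)) :
    Surjective (wreathHom X n) := by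
  classical
  intro g
  let c : (∀ k : Σ i, n i, X k.1) ≃o ∀ i, n i → X i :=
    Equiv.toOrderIso (Equiv.piCurry fun i _ => X i) (fun _ _ h _ _ => h _) (fun _ _ h _ => h _ _)
  obtain ⟨σ, hσ⟩ := (c.trans (g.trans c.symm)).exists_perm_pi fun k => hX k.1
  have hψ : ∀ k l, σ k = l → ∃ ψ : X k.1 ≃o X l.1, ∀ x, g (c x) l.1 l.2 = ψ (x k) := by
    rintro k _ rfl
    exact hσ k
  obtain ⟨τ, hτ⟩ := σ.exists_sigma_eq_of_fst fun k => by
    by_contra hk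
    obtain ⟨ψ, -⟩ := hψ k _ rfl
    exact (hdist _ _ (Ne.symm hk)).false ψ
  choose ψ hψ using hψ
  refine ⟨fun i => ⟨fun j => ψ ⟨i, (τ i).symm j⟩ ⟨i, j⟩ (by rw [hτ, Equiv.apply_symm_apply]),
    τ i⟩, ?_⟩
  ext x i j
  exact (hψ _ _ _ (c.symm x)).symm

end Wreath

theorem aut_join_prod_pow_general (r : ℕ) (Q : Fin r → BddPoset.{u})
    (hdist : ∀ i j, i ≠ j → IsEmpty ((Q i).carrier ≃o (Q j).carrier))
    (hQ : ∀ i, ∃ k : ℤ, 0 ≤ k ∧ IsAbstractPolytope (Q i).carrier k ∧ JoinPrime (Q i).carrier)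
    (m : Fin r → ℕ) :
    Nonempty ((((i : Fin r) → Fin (m i) → (Q i).carrier) ≃o
        ((i : Fin r) → Fin (m i) → (Q i).carrier)) ≃*
      ((i : Fin r) → (Fin (m i) → ((Q i).carrier ≃o (Q i).carrier))
        ⋊[permHom (Fin (m i)) ((Q i).carrier ≃o (Q i).carrier)] Equiv.Perm (Fin (m i)))) := by
  choose k hk hpoly hprime using hQ
  let _ (i : Fin r) : OrderTop (Q i).carrier := (hpoly i).orderTop
  have _ (i : Fin r) : Nontrivial (Q i).carrier := (hpoly i).nontrivial (hk i)
  exact ⟨(MulEquiv.ofBijective (wreathHom (fun i => (Q i).carrier) fun i => Fin (m i))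
    ⟨wreathHom_injective, wreathHom_surjective hdist fun i =>
      (hprime i).isDirectlyIndecomposable (hpoly i)⟩).symm⟩

/-- If `Q₁, …, Q_r` are pairwise non-order-isomorphic join-prime abstract polytopes
of rank `≥ 0`, `m₁, …, m_r ≥ 1`, and `P = Q₁^{*m₁} * ⋯ * Q_r^{*m_r}`, then
`Aut(P) ≅ ∏_{i=1}^r (Aut(Q_i)^{m_i} ⋊ Sym(m_i))`. -/
theorem aut_join_prod_pow (r : ℕ) (hr : 1 ≤ r) (Q : Fin r → BddPoset.{u})
    (hdist : ∀ i j, i ≠ j → IsEmpty ((Q i).carrier ≃o (Q j).carrier))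
    (hQ : ∀ i, ∃ k : ℤ, 0 ≤ k ∧ IsAbstractPolytope (Q i).carrier k ∧ JoinPrime (Q i).carrier)
    (m : Fin r → ℕ) (hm : ∀ i, 1 ≤ m i) :
    Nonempty ((((i : Fin r) → Fin (m i) → (Q i).carrier) ≃o
        ((i : Fin r) → Fin (m i) → (Q i).carrier)) ≃*
      ((i : Fin r) → (Fin (m i) → ((Q i).carrier ≃o (Q i).carrier))
        ⋊[permHom (Fin (m i)) ((Q i).carrier ≃o (Q i).carrier)] Equiv.Perm (Fin (m i)))) :=
  aut_join_prod_pow_general r Q hdist hQ m
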